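/- For every function u in C_c^∞(ℝ^N) (N ≥ 2), one has ∫_{ℝ^N} |∇u|² dm_N ≥ N ∫_{ℝ^N} u² dm_N. -/

import Mathlib

open MeasureTheory

/-- The measure `m_N` on `ℝ^N` with density `e^{|x|²/2}` w.r.t. Lebesgue measure. -/
noncomputable def mN (N : ℕ) : Measure (EuclideanSpace ℝ (Fin N)) :=
  MeasureTheory.volume.withDensity fun x => ENNReal.ofReal (Real.exp (‖x‖ ^ 2 / 2))

open Real NNReal ENNReal

variable {N : ℕ}

noncomputable def rho (x : EuclideanSpace ℝ (Fin N)) : ℝ := Real.exp (‖x‖ ^ 2 / 2)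

lemma rho_pos (x : EuclideanSpace ℝ (Fin N)) : 0 < rho x := Real.exp_pos _

lemma contDiff_rho : ContDiff ℝ (⊤ : ℕ∞) (rho (N := N)) :=
  Real.contDiff_exp.comp ((contDiff_norm_sq ℝ).div_const 2)

lemma hasFDerivAt_rho (x : EuclideanSpace ℝ (Fin N)) :
    HasFDerivAt rho (rho x • (innerSL ℝ x : EuclideanSpace ℝ (Fin N) →L[ℝ] ℝ)) x := by
  have h1 : HasFDerivAt (fun x : EuclideanSpace ℝ (Fin N) => ‖x‖ ^ 2 / 2)
      (innerSL ℝ x : EuclideanSpace ℝ (Fin N) →L[ℝ] ℝ) x := by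
    have := (hasStrictFDerivAt_norm_sq x).hasFDerivAt.const_smul (R := ℝ) (2⁻¹ : ℝ)
    refine (this.congr_fderiv ?_).congr_of_eventuallyEq (Filter.Eventually.of_forall fun y => ?_)
    · ext y
      simp [two_smul]
      ring
    · simp; ring
  exact h1.exp

lemma hasFDerivAt_g (i : Fin N) (x : EuclideanSpace ℝ (Fin N)) :
    HasFDerivAt (fun y : EuclideanSpace ℝ (Fin N) => y i * rho y)
      (EuclideanSpace.proj i x • (rho x • (innerSL ℝ x : EuclideanSpace ℝ (Fin N) →L[ℝ] ℝ))
        + rho x • (EuclideanSpace.proj (𝕜 := ℝ) i)) x :=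
  ((EuclideanSpace.proj (𝕜 := ℝ) i).hasFDerivAt).mul (hasFDerivAt_rho x)

lemma fderiv_g_single (i : Fin N) (x : EuclideanSpace ℝ (Fin N)) :
    fderiv ℝ (fun y : EuclideanSpace ℝ (Fin N) => y i * rho y) x
      (EuclideanSpace.single i (1:ℝ)) = rho x * (1 + x i ^ 2) := by
  rw [(hasFDerivAt_g i x).fderiv]
  simp [EuclideanSpace.inner_single_right, real_inner_comm]
  ring

lemma norm_sq_eq_sum (x : EuclideanSpace ℝ (Fin N)) : ‖x‖ ^ 2 = ∑ i, x i ^ 2 := by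
  rw [EuclideanSpace.norm_eq, Real.sq_sqrt (by positivity)]
  simp [sq_abs]

lemma sum_single_eq (x : EuclideanSpace ℝ (Fin N)) :
    ∑ i, x i • EuclideanSpace.single i (1:ℝ) = x := by
  ext j
  simp [EuclideanSpace.single_apply, Pi.single_apply]

lemma integrable_aux {V : Type*} [Zero V] {u : EuclideanSpace ℝ (Fin N) → V}
    {f : EuclideanSpace ℝ (Fin N) → ℝ} (hsupp : HasCompactSupport u)
    (hf : Continuous f) (h : ∀ x, u x = 0 → f x = 0) : Integrable f := by
  apply hf.integrable_of_hasCompactSupport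
  apply IsCompact.of_isClosed_subset hsupp (isClosed_tsupport f)
  apply closure_mono
  intro x hx
  exact fun hu0 => hx (h x hu0)

lemma ibp {u : EuclideanSpace ℝ (Fin N) → ℝ} (hu : ContDiff ℝ (⊤ : ℕ∞) u)
    (hsupp : HasCompactSupport u) (i : Fin N) :
    ∫ x : EuclideanSpace ℝ (Fin N), u x ^ 2 * (rho x * (1 + x i ^ 2)) =
      - ∫ x : EuclideanSpace ℝ (Fin N),
          (2 * u x * fderiv ℝ u x (EuclideanSpace.single i 1)) * (x i * rho x) := by
  have hDu : Continuous fun x : EuclideanSpace ℝ (Fin N) => fderiv ℝ u x :=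
    hu.continuous_fderiv (by simp)
  have hcu : Continuous u := hu.continuous
  have hf2 : ∀ x, fderiv ℝ (fun y => u y ^ 2) x (EuclideanSpace.single i (1:ℝ))
      = 2 * u x * fderiv ℝ u x (EuclideanSpace.single i 1) := by
    intro x
    have hd := (hu.differentiable (by simp) x).hasFDerivAt
    have hsq : (fun y => u y ^ 2) = fun y => u y * u y := by ext y; ring
    rw [hsq, show (fun y => u y * u y) = u * u from rfl, (hd.mul hd).fderiv]
    simp
    ring
  have key := integral_mul_fderiv_eq_neg_fderiv_mul_of_integrable (μ := volume)
      (f := fun x => u x ^ 2)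
      (g := fun y : EuclideanSpace ℝ (Fin N) => y i * rho y)
      (v := EuclideanSpace.single i (1:ℝ)) ?_ ?_ ?_ ?_ ?_
  · simp only [fderiv_g_single, hf2] at key
    exact key
  · simp only [hf2]
    apply integrable_aux hsupp
    · exact ((continuous_const.mul hcu).mul (hDu.clm_apply continuous_const)).mul
        ((EuclideanSpace.proj (𝕜 := ℝ) i).continuous.mul contDiff_rho.continuous)
    · intro x hx; simp [hx]
  · simp only [fderiv_g_single]
    apply integrable_aux hsupp
    · exact (hcu.pow 2).mul (contDiff_rho.continuous.mul
        (continuous_const.add ((EuclideanSpace.proj (𝕜 := ℝ) i).continuous.pow 2)))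
    · intro x hx; simp [hx]
  · apply integrable_aux hsupp
    · exact (hcu.pow 2).mul ((EuclideanSpace.proj (𝕜 := ℝ) i).continuous.mul contDiff_rho.continuous)
    · intro x hx; simp [hx]
  · exact fun x _ => (hu.pow 2).differentiable (by simp) x
  · exact fun x _ => (hasFDerivAt_g i x).differentiableAt

lemma key_identity {u : EuclideanSpace ℝ (Fin N) → ℝ} (hu : ContDiff ℝ (⊤ : ℕ∞) u)
    (hsupp : HasCompactSupport u) :
    (N : ℝ) * (∫ x : EuclideanSpace ℝ (Fin N), rho x * u x ^ 2)
      + ∫ x : EuclideanSpace ℝ (Fin N), u x ^ 2 * ‖x‖ ^ 2 * rho x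
      = - ∫ x : EuclideanSpace ℝ (Fin N), (2 * u x * fderiv ℝ u x x) * rho x := by
  have hDu : Continuous fun x : EuclideanSpace ℝ (Fin N) => fderiv ℝ u x :=
    hu.continuous_fderiv (by simp)
  have hcu : Continuous u := hu.continuous
  have hInt1 : ∀ i : Fin N,
      Integrable (fun x : EuclideanSpace ℝ (Fin N) => u x ^ 2 * (rho x * (1 + x i ^ 2))) := by
    intro i
    apply integrable_aux hsupp
    · exact (hcu.pow 2).mul (contDiff_rho.continuous.mul
        (continuous_const.add ((EuclideanSpace.proj (𝕜 := ℝ) i).continuous.pow 2)))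
    · intro x hx; simp [hx]
  have hInt2 : ∀ i : Fin N,
      Integrable (fun x : EuclideanSpace ℝ (Fin N) =>
        (2 * u x * fderiv ℝ u x (EuclideanSpace.single i 1)) * (x i * rho x)) := by
    intro i
    apply integrable_aux hsupp
    · exact ((continuous_const.mul hcu).mul (hDu.clm_apply continuous_const)).mul
        ((EuclideanSpace.proj (𝕜 := ℝ) i).continuous.mul contDiff_rho.continuous)
    · intro x hx; simp [hx]
  have hsum : ∑ i : Fin N, (∫ x : EuclideanSpace ℝ (Fin N), u x ^ 2 * (rho x * (1 + x i ^ 2)))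
      = ∑ i : Fin N, - ∫ x : EuclideanSpace ℝ (Fin N),
          (2 * u x * fderiv ℝ u x (EuclideanSpace.single i 1)) * (x i * rho x) :=
    Finset.sum_congr rfl fun i _ => ibp hu hsupp i
  rw [← integral_finset_sum _ (fun i _ => hInt1 i), Finset.sum_neg_distrib,
    ← integral_finset_sum _ (fun i _ => hInt2 i)] at hsum
  have hL : ∀ x : EuclideanSpace ℝ (Fin N),
      ∑ i : Fin N, u x ^ 2 * (rho x * (1 + x i ^ 2))
        = (N : ℝ) * (rho x * u x ^ 2) + u x ^ 2 * ‖x‖ ^ 2 * rho x := by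
    intro x
    rw [norm_sq_eq_sum]
    simp only [mul_add, mul_one, Finset.sum_add_distrib, Finset.sum_const, Finset.card_univ,
      Fintype.card_fin, nsmul_eq_mul, ← Finset.mul_sum]
    ring
  have hR : ∀ x : EuclideanSpace ℝ (Fin N),
      ∑ i : Fin N, (2 * u x * fderiv ℝ u x (EuclideanSpace.single i 1)) * (x i * rho x)
        = (2 * u x * fderiv ℝ u x x) * rho x := by
    intro x
    have hx : fderiv ℝ u x x = ∑ i : Fin N, x i * fderiv ℝ u x (EuclideanSpace.single i 1) :=
      calc fderiv ℝ u x x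
          = fderiv ℝ u x (∑ i : Fin N, x i • EuclideanSpace.single i 1) := by rw [sum_single_eq]
        _ = ∑ i : Fin N, x i * fderiv ℝ u x (EuclideanSpace.single i 1) := by
            rw [map_sum]; simp only [_root_.map_smul, smul_eq_mul]
    rw [hx, Finset.mul_sum, Finset.sum_mul]
    apply Finset.sum_congr rfl
    intros; ring
  simp only [hL, hR] at hsum
  rw [integral_add, integral_const_mul] at hsum
  · exact hsum
  · apply Integrable.const_mul
    apply integrable_aux hsupp (contDiff_rho.continuous.mul (hcu.pow 2))
    intro x hx; simp [hx]
  · apply integrable_aux hsupp (((hcu.pow 2).mul (continuous_norm.pow 2)).mul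
      contDiff_rho.continuous)
    intro x hx; simp [hx]

lemma integral_mN (f : EuclideanSpace ℝ (Fin N) → ℝ) :
    ∫ x, f x ∂(mN N) = ∫ x : EuclideanSpace ℝ (Fin N), rho x * f x := by
  have hmeas : Measurable fun x : EuclideanSpace ℝ (Fin N) => Real.toNNReal (rho x) :=
    contDiff_rho.continuous.measurable.real_toNNReal
  have : mN N = MeasureTheory.volume.withDensity
      (fun x : EuclideanSpace ℝ (Fin N) => ((Real.toNNReal (rho x) : ℝ≥0) : ℝ≥0∞)) := rfl
  rw [this, integral_withDensity_eq_integral_smul hmeas f]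
  congr 1
  funext x
  rw [NNReal.smul_def, smul_eq_mul, Real.coe_toNNReal _ (rho_pos x).le]

/-- Poincaré inequality: for every `u ∈ C_c^∞(ℝ^N)` (`N ≥ 2`),
`∫ |∇u|² dm_N ≥ N ∫ u² dm_N`. -/
theorem poincare_mN (N : ℕ) (hN : 2 ≤ N) (u : EuclideanSpace ℝ (Fin N) → ℝ)
    (hu : ContDiff ℝ (⊤ : ℕ∞) u) (hsupp : HasCompactSupport u) :
    (N : ℝ) * ∫ x, u x ^ 2 ∂(mN N) ≤ ∫ x, ‖fderiv ℝ u x‖ ^ 2 ∂(mN N) := by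
  have hDu : Continuous fun x : EuclideanSpace ℝ (Fin N) => fderiv ℝ u x :=
    hu.continuous_fderiv (by simp)
  have hcu : Continuous u := hu.continuous
  rw [integral_mN, integral_mN]
  have hIb : Integrable (fun x : EuclideanSpace ℝ (Fin N) => u x ^ 2 * ‖x‖ ^ 2 * rho x) := by
    apply integrable_aux hsupp
      (((hcu.pow 2).mul (continuous_norm.pow 2)).mul contDiff_rho.continuous)
    intro x hx; simp [hx]
  have hIc : Integrable
      (fun x : EuclideanSpace ℝ (Fin N) => (2 * u x * fderiv ℝ u x x) * rho x) := by
    apply integrable_aux hsupp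
      (((continuous_const.mul hcu).mul (hDu.clm_apply continuous_id)).mul
        contDiff_rho.continuous)
    intro x hx; simp [hx]
  have hId : Integrable (fun x : EuclideanSpace ℝ (Fin N) => rho x * ‖fderiv ℝ u x‖ ^ 2) := by
    apply integrable_aux (hsupp.fderiv (𝕜 := ℝ)) (contDiff_rho.continuous.mul (hDu.norm.pow 2))
    intro x hx; simp [hx]
  have key := key_identity hu hsupp
  have step : (N : ℝ) * (∫ x : EuclideanSpace ℝ (Fin N), rho x * u x ^ 2)
      = ∫ x : EuclideanSpace ℝ (Fin N),
          (-(2 * u x * fderiv ℝ u x x * rho x) - u x ^ 2 * ‖x‖ ^ 2 * rho x) := by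
    rw [integral_sub hIc.neg' hIb, integral_neg]
    linarith [key]
  rw [step]
  apply integral_mono _ hId
  · intro x
    have hb : |fderiv ℝ u x x| ≤ ‖fderiv ℝ u x‖ * ‖x‖ := by
      rw [← Real.norm_eq_abs]
      exact (fderiv ℝ u x).le_opNorm x
    have hρ : 0 ≤ rho x := (rho_pos x).le
    have habs : |u x * fderiv ℝ u x x| ≤ |u x| * (‖fderiv ℝ u x‖ * ‖x‖) := by
      rw [abs_mul]
      exact mul_le_mul_of_nonneg_left hb (abs_nonneg _)
    have h1 : -(2 * u x * fderiv ℝ u x x) - u x ^ 2 * ‖x‖ ^ 2 ≤ ‖fderiv ℝ u x‖ ^ 2 := by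
      nlinarith [sq_nonneg (‖fderiv ℝ u x‖ - |u x| * ‖x‖), neg_abs_le (u x * fderiv ℝ u x x),
        sq_abs (u x), abs_nonneg (u x), norm_nonneg x, norm_nonneg (fderiv ℝ u x)]
    calc -(2 * u x * fderiv ℝ u x x * rho x) - u x ^ 2 * ‖x‖ ^ 2 * rho x
        = (-(2 * u x * fderiv ℝ u x x) - u x ^ 2 * ‖x‖ ^ 2) * rho x := by ring
      _ ≤ ‖fderiv ℝ u x‖ ^ 2 * rho x := mul_le_mul_of_nonneg_right h1 hρ
      _ = rho x * ‖fderiv ℝ u x‖ ^ 2 := by ring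
  · apply Integrable.sub hIc.neg' hIb
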